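/- arXiv:1508.07158 — 7 statements merged into one kernel-verified Lean document; each statement's English description precedes it below -/
import Mathlib

section
/- Let k be a number field, let h₁(z),…,hₙ(z) be power series with coefficients in k converging in a neighborhood of 0, and let α ∈ k lie in the common domain of convergence. Suppose there exist polynomials w₁(z),…,wₙ(z) with algebraic-number coefficients, not all zero, such that w₁(z)h₁(z)+⋯+wₙ(z)hₙ(z)=0, with wᵢ(α)=0 for every i in a set I ⊆ {1,…,n}, and w_{i₀}(α)≠0 for some index i₀ ∉ I. Then there exist polynomials w′₁(z),…,w′ₙ(z) with coefficients in k, not all zero, such that w′₁(z)h₁(z)+⋯+w′ₙ(z)hₙ(z)=0, w′ᵢ(α)=0 for all i ∈ I, and w′_{i₀}(α)≠0. -/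
/-!
Choose a `k`-linear functional `λ : ℂ → k` with `λ (w i₀ α) ≠ 0`; it exists because `ℂ` is a
vector space over `k`. Applying `λ` to every coefficient of every `w i` gives polynomials with
coefficients in `k`. Since the `h i` have coefficients in `k`, each coefficient of
`∑ w' i * h i` is `λ` of the corresponding coefficient of `∑ w i * h i`, hence zero; and since
`α ∈ k`, `w' i α = λ (w i α)`, which transports the vanishing conditions and the nonvanishing
at `i₀`.
-/

namespace Polynomial

variable {R A B : Type*} [CommSemiring R] [Semiring A] [Semiring B] [Algebra R A] [Algebra R B]

noncomputable def mapLinear (f : A →ₗ[R] B) (p : A[X]) : B[X] :=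
  p.sum fun n a => monomial n (f a)

@[simp]
theorem coeff_mapLinear (f : A →ₗ[R] B) (p : A[X]) (m : ℕ) :
    (p.mapLinear f).coeff m = f (p.coeff m) := by
  rw [mapLinear, coeff_sum, sum_def, Finset.sum_eq_single m]
  · rw [coeff_monomial_same]
  · exact fun n _ hnm => coeff_monomial_of_ne _ hnm.symm
  · intro hm
    rw [notMem_support_iff.mp hm, map_zero, coeff_monomial_same]

theorem natDegree_mapLinear_le (f : A →ₗ[R] B) (p : A[X]) :
    (p.mapLinear f).natDegree ≤ p.natDegree :=
  natDegree_le_iff_coeff_eq_zero.mpr fun m hm => by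
    rw [coeff_mapLinear, coeff_eq_zero_of_natDegree_lt (by exact_mod_cast hm), map_zero]

theorem eval_algebraMap_mapLinear (f : A →ₗ[R] B) (p : A[X]) (r : R) :
    (p.mapLinear f).eval (algebraMap R B r) = f (p.eval (algebraMap R A r)) := by
  have hdeg := (natDegree_mapLinear_le f p).trans_lt p.natDegree.lt_succ_self
  rw [eval_eq_sum_range' hdeg, eval_eq_sum_range, map_sum]
  refine Finset.sum_congr rfl fun m _ => ?_
  rw [coeff_mapLinear, ← map_pow, ← map_pow, f.map_mul_algebraMap]

end Polynomial

namespace PowerSeries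

variable {R A B : Type*} [CommSemiring R] [Semiring A] [Semiring B] [Algebra R A] [Algebra R B]

noncomputable def mapLinear (f : A →ₗ[R] B) : A⟦X⟧ →ₗ[R] B⟦X⟧ where
  toFun φ := mk fun n => f (coeff n φ)
  map_add' φ ψ := by ext; simp
  map_smul' r φ := by ext; simp

@[simp]
theorem coeff_mapLinear (f : A →ₗ[R] B) (φ : A⟦X⟧) (n : ℕ) :
    coeff n (mapLinear f φ) = f (coeff n φ) :=
  coeff_mk n fun m => f (coeff m φ)

theorem mapLinear_coe (f : A →ₗ[R] B) (p : Polynomial A) :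
    mapLinear f (p : A⟦X⟧) = (p.mapLinear f : B⟦X⟧) := by
  ext n
  simp

theorem mapLinear_mul_map_algebraMap (f : A →ₗ[R] B) (φ : A⟦X⟧) (ψ : R⟦X⟧) :
    mapLinear f (φ * map (algebraMap R A) ψ) = mapLinear f φ * map (algebraMap R B) ψ := by
  ext n
  simp only [coeff_mapLinear, coeff_mul, map_sum, coeff_map, f.map_mul_algebraMap]

theorem sum_coe_mapLinear_mul_map_eq_zero {ι : Type*} (s : Finset ι) (f : A →ₗ[R] B)
    (p : ι → Polynomial A) (g : ι → R⟦X⟧)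
    (hrel : ∑ i ∈ s, (p i : A⟦X⟧) * map (algebraMap R A) (g i) = 0) :
    ∑ i ∈ s, ((p i).mapLinear f : B⟦X⟧) * map (algebraMap R B) (g i) = 0 := by
  simp only [← mapLinear_coe, ← mapLinear_mul_map_algebraMap, ← map_sum, hrel, map_zero]

theorem exists_map_algebraMap_eq (φ : A⟦X⟧) (hφ : ∀ n, coeff n φ ∈ Set.range (algebraMap R A)) :
    ∃ ψ : R⟦X⟧, map (algebraMap R A) ψ = φ :=
  ⟨mk fun n => (hφ n).choose, by ext n; simp [(hφ n).choose_spec]⟩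

end PowerSeries

theorem descent_lemma_general
    (k : Subfield ℂ)
    (n : ℕ) (h : Fin n → PowerSeries ℂ)
    (hcoeff : ∀ i m, PowerSeries.coeff m (h i) ∈ k)
    (α : ℂ) (hα : α ∈ k)
    (w : Fin n → Polynomial ℂ)
    (hrel : (∑ i, (w i : PowerSeries ℂ) * h i) = 0)
    (I : Set (Fin n))
    (hI : ∀ i ∈ I, (w i).eval α = 0)
    (i₀ : Fin n) (hwi₀ : (w i₀).eval α ≠ 0) :
    ∃ w' : Fin n → Polynomial ℂ,
      (∀ i m, (w' i).coeff m ∈ k) ∧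
      w' ≠ 0 ∧
      (∑ i, (w' i : PowerSeries ℂ) * h i) = 0 ∧
      (∀ i ∈ I, (w' i).eval α = 0) ∧
      (w' i₀).eval α ≠ 0 := by
  obtain ⟨φ, hφ⟩ := Module.Projective.exists_dual_ne_zero k hwi₀
  set f : ℂ →ₗ[k] ℂ := Algebra.linearMap k ℂ ∘ₗ φ
  have hf (x : ℂ) : f x = φ x := rfl
  have heval (i : Fin n) : ((w i).mapLinear f).eval α = f ((w i).eval α) :=
    Polynomial.eval_algebraMap_mapLinear f (w i) ⟨α, hα⟩
  choose h₀ hh₀ using fun i =>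
    PowerSeries.exists_map_algebraMap_eq (R := k) (h i) fun m => ⟨⟨_, hcoeff i m⟩, rfl⟩
  have hrel' : ∑ i, ((w i).mapLinear f : PowerSeries ℂ) * h i = 0 := by
    simp only [← hh₀] at hrel ⊢
    exact PowerSeries.sum_coe_mapLinear_mul_map_eq_zero _ f w h₀ hrel
  have hi₀ : ((w i₀).mapLinear f).eval α ≠ 0 := by
    rw [heval, hf]
    exact_mod_cast hφ
  refine ⟨fun i => (w i).mapLinear f, fun i m => ?_,
    fun hw => hi₀ (by simp [show (w i₀).mapLinear f = 0 from congrFun hw i₀]), hrel',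
    fun i hi => by rw [heval, hI i hi, map_zero], hi₀⟩
  rw [Polynomial.coeff_mapLinear, hf]
  exact SetLike.coe_mem _

/-- **Descent lemma.** If power series `h i` with coefficients in a number field `k ⊆ ℂ`
converge at `α ∈ k`, and admit a nontrivial polynomial relation with algebraic-number
coefficients, with prescribed vanishing/nonvanishing at `α`, then they admit such a
relation with coefficients in `k`. -/
theorem descent_lemma
    (k : Subfield ℂ) (hk : FiniteDimensional ℚ k)
    (n : ℕ) (h : Fin n → PowerSeries ℂ)
    (hcoeff : ∀ i m, PowerSeries.coeff m (h i) ∈ k)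
    (α : ℂ) (hα : α ∈ k)
    (hconv : ∀ i, Summable fun m => ‖PowerSeries.coeff m (h i)‖ * ‖α‖ ^ m)
    (w : Fin n → Polynomial ℂ)
    (hwalg : ∀ i m, IsAlgebraic ℚ ((w i).coeff m))
    (hwne : w ≠ 0)
    (hrel : (∑ i, (w i : PowerSeries ℂ) * h i) = 0)
    (I : Set (Fin n))
    (hI : ∀ i ∈ I, (w i).eval α = 0)
    (i₀ : Fin n) (hi₀ : i₀ ∉ I) (hwi₀ : (w i₀).eval α ≠ 0) :
    ∃ w' : Fin n → Polynomial ℂ,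
      (∀ i m, (w' i).coeff m ∈ k) ∧
      w' ≠ 0 ∧
      (∑ i, (w' i : PowerSeries ℂ) * h i) = 0 ∧
      (∀ i ∈ I, (w' i).eval α = 0) ∧
      (w' i₀).eval α ≠ 0 :=
  descent_lemma_general k n h hcoeff α hα w hrel I hI i₀ hwi₀
end

section
/- Let K/F be a field extension that is finitely generated (as a field extension) over F. Then the relative algebraic closure F′ of F in K (the set of elements of K algebraic over F) is a finite extension of F. -/
/-!
Choose a transcendence basis `x` of `K/F`; since `K/F` is finitely generated, `K` is finite over
`F(x)`. The family `x` stays algebraically independent over the relative algebraic closure `F'`,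
so the monomials in `x` are `F'`-linearly independent, i.e. `F'` and `F[x]` are linearly disjoint
over `F`. Hence an `F`-basis of `F'` stays linearly independent over `F[x]`, and so over its
fraction field `F(x)`, giving `[F' : F] ≤ [K : F(x)] < ∞`.
-/

open IntermediateField
open scoped IntermediateField.algebraAdjoinAdjoin

section

variable {F K : Type*} [Field F] [Field K] [Algebra F K] {ι : Type*} {x : ι → K}

theorem AlgebraicIndependent.linearDisjoint_adjoin {E : IntermediateField F K}
    (hx : AlgebraicIndependent E x) :
    E.toSubalgebra.LinearDisjoint (Algebra.adjoin F (Set.range x)) := by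
  have hxF : AlgebraicIndependent F x := hx.restrictScalars (algebraMap F E).injective
  refine .of_basis_right _ _
    ((MvPolynomial.basisMonomials ι F).map hxF.aevalEquiv.toLinearEquiv) ?_
  have hmonomials : (Algebra.adjoin F (Set.range x)).val ∘
      ((MvPolynomial.basisMonomials ι F).map hxF.aevalEquiv.toLinearEquiv) =
      (MvPolynomial.aeval x).toLinearMap ∘ MvPolynomial.basisMonomials ι E := by
    funext m
    simp [MvPolynomial.aeval_monomial]
  rw [hmonomials]
  exact (MvPolynomial.basisMonomials ι E).linearIndependent.map' _ (LinearMap.ker_eq_bot.2 hx)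

theorem AlgebraicIndependent.linearIndependent_adjoin {E : IntermediateField F K}
    (hx : AlgebraicIndependent E x) {κ : Type*} {a : κ → E} (ha : LinearIndependent F a) :
    LinearIndependent (adjoin F (Set.range x)) (E.val ∘ a) :=
  (LinearIndependent.iff_fractionRing (Algebra.adjoin F (Set.range x)) _).mp
    (hx.linearDisjoint_adjoin.linearIndependent_left_of_flat ha)

theorem AlgebraicIndependent.rank_le_rank_adjoin {E : IntermediateField F K}
    (hx : AlgebraicIndependent E x) :
    Module.rank F E ≤ Module.rank (adjoin F (Set.range x)) K := by
  have b := Module.Basis.ofVectorSpace F E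
  rw [← b.mk_eq_rank'']
  exact (hx.linearIndependent_adjoin b.linearIndependent).cardinal_le_rank

theorem IsTranscendenceBasis.finite_adjoin [Algebra.EssFiniteType F K]
    (hx : IsTranscendenceBasis F x) : Module.Finite (adjoin F (Set.range x)) K :=
  have := hx.isAlgebraic_field
  have := Algebra.EssFiniteType.of_comp F (adjoin F (Set.range x)) K
  Algebra.finite_of_essFiniteType_of_isAlgebraic

end

/-- If `K/F` is a finitely generated field extension, then the relative algebraic closure
of `F` in `K` (the elements of `K` algebraic, i.e. integral, over `F`) is a finite
extension of `F`. -/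
theorem relAlgClosure_finiteDimensional_of_fg
    (F K : Type*) [Field F] [Field K] [Algebra F K]
    (hfg : ∃ s : Finset K, IntermediateField.adjoin F (s : Set K) = ⊤) :
    FiniteDimensional F (integralClosure F K) := by
  have : Algebra.EssFiniteType F K := fg_top_iff.mp hfg
  obtain ⟨ι, x, hx⟩ := exists_isTranscendenceBasis' F K
  have := hx.finite_adjoin
  have hrank : Module.rank F (algebraicClosure F K) < Cardinal.aleph0 :=
    hx.1.algebraicClosure.rank_le_rank_adjoin.trans_lt (Module.rank_lt_aleph0 _ K)
  rw [← algebraicClosure_toSubalgebra]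
  exact Module.rank_lt_aleph0_iff.mp hrank
end

section
/- Let f₁(z),…,fₙ(z) ∈ ℚ̄[[z]] and let d be the dimension over ℚ̄(z) of the vector space Rel_{ℚ̄(z)}(f₁,…,fₙ) := {(w₁(z),…,wₙ(z)) ∈ ℚ̄(z)ⁿ : Σ wᵢ(z)fᵢ(z) = 0}. Then there exist polynomials λ_{i,j}(z) ∈ ℚ̄[z] for 1 ≤ i ≤ d, 1 ≤ j ≤ n, such that the d vectors (λ_{i,1}(z),…,λ_{i,n}(z)) form a basis of the ℚ̄[z]-module of polynomial relations among f₁,…,fₙ, and such that for every ξ ∈ ℚ̄ the d×n matrix (λ_{i,j}(ξ)) has rank exactly d. -/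
/-!
The polynomial relations form the kernel `M` of `w ↦ ∑ⱼ wⱼ fⱼ` on `K[X]ⁿ`. The quotient
`K[X]ⁿ ⧸ M` embeds into the domain `K⟦X⟧`, so it is torsion-free, hence free over the PID `K[X]`,
and `M` is a direct summand of `K[X]ⁿ`. The matrix `Λ` of a basis of `M` therefore has a
polynomial right inverse `B` (from a retraction `K[X]ⁿ → M`), and `Λ(ξ) B(ξ) = 1` shows that
`Λ(ξ)` has full rank at every point `ξ`. The rank of `M` is `d` because the `K(X)`-relations are
the localization of `M` at the nonzero polynomials.
-/

open scoped BigOperators RatFunc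

/-- The `ℚ̄(z)`-linear map sending a vector of rational functions `w` to
`∑ᵢ wᵢ(z)·fᵢ(z)`, computed in the Laurent series field.  Its kernel is the space
`Rel_{ℚ̄(z)}(f₁,…,fₙ)` of `ℚ̄(z)`-linear relations among the `fᵢ`. -/
noncomputable def relMap {K : Type*} [Field K] (n : ℕ) (f : Fin n → PowerSeries K) :
    (Fin n → RatFunc K) →ₗ[RatFunc K] LaurentSeries K :=
  Fintype.linearCombination (RatFunc K)
    (fun i => ((f i : LaurentSeries K)))

open Module Matrix Polynomial PowerSeries LinearMap nonZeroDivisors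

theorem Submodule.exists_comp_subtype_eq_id_of_projective_quotient {R V : Type*} [Ring R]
    [AddCommGroup V] [Module R V] (M : Submodule R V) [Projective R (V ⧸ M)] :
    ∃ π : V →ₗ[R] M, π ∘ₗ M.subtype = LinearMap.id := by
  obtain ⟨s, hs⟩ := M.mkQ.exists_rightInverse_of_surjective M.range_mkQ
  have hmem : ∀ x, x - s (M.mkQ x) ∈ M := fun x => by
    rw [← Submodule.Quotient.mk_eq_zero, ← M.mkQ_apply, map_sub, ← LinearMap.comp_apply, hs,
      LinearMap.id_apply, sub_self]
  refine ⟨codRestrict M (LinearMap.id - s ∘ₗ M.mkQ) hmem, LinearMap.ext fun x => ?_⟩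
  ext1
  simp [(Submodule.Quotient.mk_eq_zero M).mpr x.2]

theorem Submodule.exists_mul_eq_one_of_basis {R ι κ : Type*} [CommRing R] [Fintype ι]
    [DecidableEq ι] [Fintype κ] [DecidableEq κ] (M : Submodule R (ι → R))
    [Projective R ((ι → R) ⧸ M)] (b : Basis κ R M) :
    ∃ B : Matrix ι κ R, Matrix.of (fun i j => (b i : ι → R) j) * B = 1 := by
  obtain ⟨π, hπ⟩ := M.exists_comp_subtype_eq_id_of_projective_quotient
  set P : (ι → R) →ₗ[R] (κ → R) := b.equivFun.toLinearMap ∘ₗ π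
  set Q : (κ → R) →ₗ[R] (ι → R) := M.subtype ∘ₗ b.equivFun.symm.toLinearMap
  have hPQ : P ∘ₗ Q = LinearMap.id := by
    have hπ' : ∀ y : M, π y = y := LinearMap.congr_fun hπ
    refine LinearMap.ext fun x => ?_
    simp only [P, Q, LinearMap.comp_apply, LinearEquiv.coe_coe, Submodule.subtype_apply, hπ',
      LinearEquiv.apply_symm_apply, LinearMap.id_apply]
  have hQ : toMatrix' Q = (Matrix.of fun i j => (b i : ι → R) j)ᵀ := by
    ext j i
    simp [Q, toMatrix'_apply]
  refine ⟨(toMatrix' P)ᵀ, ?_⟩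
  rw [← transpose_transpose (Matrix.of _), ← transpose_mul, ← hQ, ← toMatrix'_comp, hPQ,
    toMatrix'_id, transpose_one]

theorem Matrix.rank_map_eq_card_of_mul_eq_one {R k m n : Type*} [CommRing R] [Field k]
    [Fintype m] [DecidableEq m] [Fintype n] (φ : R →+* k) {A : Matrix m n R}
    {B : Matrix n m R} (h : A * B = 1) : (A.map φ).rank = Fintype.card m := by
  have hφ : A.map φ * B.map φ = 1 := by
    rw [← Matrix.map_mul, h, Matrix.map_one φ φ.map_zero φ.map_one]
  refine le_antisymm (A.map φ).rank_le_card_height ?_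
  calc Fintype.card m = (1 : Matrix m m k).rank := Matrix.rank_one.symm
    _ ≤ (A.map φ).rank := hφ ▸ Matrix.rank_mul_le_left _ _

theorem Submodule.span_range_coe_basis {R M ι : Type*} [Semiring R] [AddCommMonoid M]
    [Module R M] (N : Submodule R M) (b : Basis ι R N) :
    span R (Set.range fun i => (b i : M)) = N := by
  change span R (Set.range (N.subtype ∘ b)) = N
  rw [Set.range_comp, Submodule.span_image, b.span_eq, Submodule.map_top,
    Submodule.range_subtype]

theorem LinearMap.isTorsionFree_quotient_ker {R M N : Type*} [CommRing R] [AddCommGroup M]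
    [Module R M] [AddCommGroup N] [Module R N] [IsTorsionFree R N] (g : M →ₗ[R] N) :
    IsTorsionFree R (M ⧸ ker g) :=
  (ker g).ker_liftQ_eq_bot' g rfl |> ker_eq_bot.mp |>.moduleIsTorsionFree _ (map_smul _)

theorem Polynomial.algebraMap_powerSeries_apply {R : Type*} [CommSemiring R] (p : R[X]) :
    algebraMap R[X] R⟦X⟧ p = p := by
  simp [PowerSeries.algebraMap_apply']

instance Polynomial.isTorsionFree_powerSeries {R : Type*} [CommRing R] [IsDomain R] :
    IsTorsionFree R[X] R⟦X⟧ :=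
  isTorsionFree_iff_algebraMap_injective.mpr fun p q h =>
    Polynomial.coe_injective R (by simpa only [algebraMap_powerSeries_apply] using h)

section PolynomialRelations

variable {K : Type*} [Field K] {n : ℕ}

noncomputable def polyRelMap (f : Fin n → K⟦X⟧) : (Fin n → K[X]) →ₗ[K[X]] K⟦X⟧ :=
  Fintype.linearCombination K[X] f

theorem polyRelMap_apply (f : Fin n → K⟦X⟧) (w : Fin n → K[X]) :
    polyRelMap f w = ∑ j, (w j : K⟦X⟧) * f j := by
  simp [polyRelMap, Fintype.linearCombination_apply, Algebra.smul_def,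
    algebraMap_powerSeries_apply]

/-- An `abbrev`, so that `IsLocalizedModule.pi` applies to it. -/
noncomputable abbrev polyToRatFunc : (Fin n → K[X]) →ₗ[K[X]] (Fin n → RatFunc K) :=
  .pi fun j => Algebra.linearMap K[X] (RatFunc K) ∘ₗ .proj j

theorem relMap_polyToRatFunc (f : Fin n → K⟦X⟧) (w : Fin n → K[X]) :
    relMap n f (polyToRatFunc w) = HahnSeries.ofPowerSeries ℤ K (polyRelMap f w) := by
  simp only [relMap, Fintype.linearCombination_apply, polyRelMap_apply, Algebra.smul_def, map_sum,
    map_mul]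
  refine Finset.sum_congr rfl fun j _ => ?_
  rw [RatFunc.coe_coe]
  rfl

theorem comap_polyToRatFunc_ker_relMap (f : Fin n → K⟦X⟧) :
    ((ker (relMap n f)).restrictScalars K[X]).comap polyToRatFunc = ker (polyRelMap f) := by
  ext w
  simp [relMap_polyToRatFunc, map_eq_zero_iff _ HahnSeries.ofPowerSeries_injective]

theorem ker_relMap_eq_localized' (f : Fin n → K⟦X⟧) :
    ker (relMap n f) = (ker (polyRelMap f)).localized' (RatFunc K) K[X]⁰ polyToRatFunc := by
  rw [← comap_polyToRatFunc_ker_relMap]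
  -- every `K(X)`-subspace is the localization of its polynomial points
  exact ((Submodule.localized'gi (RatFunc K) K[X]⁰ polyToRatFunc).l_u_eq _).symm

theorem finrank_ker_relMap (f : Fin n → K⟦X⟧) :
    finrank (RatFunc K) (ker (relMap n f)) = finrank K[X] (ker (polyRelMap f)) := by
  rw [ker_relMap_eq_localized', IsFractionRing.finrank_right_eq K[X] (RatFunc K),
    IsLocalizedModule.finrank_eq K[X]⁰
      ((ker (polyRelMap f)).toLocalized' (RatFunc K) K[X]⁰ polyToRatFunc) le_rfl]

end PolynomialRelations

/-- **Beukers' linear algebra lemma.** If `d` is the dimension of the space of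
`ℚ̄(z)`-linear relations among `f₁,…,fₙ ∈ ℚ̄[[z]]`, then there is a basis
`λ₁,…,λ_d` of the `ℚ̄[z]`-module of polynomial relations whose evaluation at every
`ξ ∈ ℚ̄` is a matrix of rank exactly `d`. -/
theorem beukers_basis_lemma
    (n : ℕ) (f : Fin n → PowerSeries (AlgebraicClosure ℚ))
    (d : ℕ)
    (hd : d = Module.finrank (RatFunc (AlgebraicClosure ℚ))
      (LinearMap.ker (relMap n f))) :
    ∃ lam : Fin d → Fin n → Polynomial (AlgebraicClosure ℚ),
      -- each `lam i` is a polynomial relation among the `fⱼ`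
      (∀ i, (∑ j, ((lam i j : PowerSeries (AlgebraicClosure ℚ)) * f j)) = 0) ∧
      -- they form a basis of the `ℚ̄[z]`-module of polynomial relations
      LinearIndependent (Polynomial (AlgebraicClosure ℚ)) lam ∧
      (∀ w : Fin n → Polynomial (AlgebraicClosure ℚ),
        (∑ j, ((w j : PowerSeries (AlgebraicClosure ℚ)) * f j)) = 0 →
        w ∈ Submodule.span (Polynomial (AlgebraicClosure ℚ)) (Set.range lam)) ∧
      -- full rank at every algebraic point
      (∀ ξ : AlgebraicClosure ℚ,
        Matrix.rank (Matrix.of fun i j => (lam i j).eval ξ) = d) := by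
  set M := ker (polyRelMap f)
  obtain ⟨m, b⟩ := Submodule.basisOfPid (Pi.basisFun _ (Fin n)) M
  obtain rfl : d = m := by
    rw [hd, finrank_ker_relMap, finrank_eq_card_basis b, Fintype.card_fin]
  have : IsTorsionFree _ ((Fin n → _) ⧸ M) := isTorsionFree_quotient_ker _
  obtain ⟨B, hB⟩ := M.exists_mul_eq_one_of_basis b
  refine ⟨fun i => b i, fun i => ?_, b.linearIndependent.map' M.subtype M.ker_subtype,
    fun w hw => ?_, fun ξ => ?_⟩
  · rw [← polyRelMap_apply]
    exact (b i).2
  · rw [M.span_range_coe_basis b, mem_ker, polyRelMap_apply]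
    exact hw
  · exact (rank_map_eq_card_of_mul_eq_one (evalRingHom ξ) hB).trans (Fintype.card_fin _)
end

section
/- Let V be a finite-dimensional vector space over a field k, let C₀,…,C_{q−1} be linear endomorphisms of V, and let (G_i)_{i ≥ 0} be a sequence of vectors in V satisfying a recursion: for all i ≥ a₀, writing i = qs + j − ν with 0 ≤ j < q, one has G_i = C_j(G_{s−e+1}) with s − e + 1 < i. Define V_l := span{G₀,…,G_l}. If for some integer a ≥ (ν − d)/(q − 1) one has V_a = V_{q(a+e)−ν−1}, then V_l = V_a for all l ≥ a, i.e. the increasing chain (V_l) is constant from rank a on. -/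
/-!
The span `V_a` is invariant under every `C_j`: for `t ≤ a` the vector `C_j (G_t)` is
`G_{q(t+e-1)+j-ν}`, whose index is at most `q(a+e)-ν-1`, so it lies in
`V_{q(a+e)-ν-1} = V_a`. Every `G_m` with `m > a` is the image under some `C_j` of a `G_t`
with `t < m`, so strong induction on `m` puts all of them in `V_a`.
-/

open Set

theorem Int.exists_eq_mul_add_fin_sub {q : ℕ} (hq : 0 < q) (ν i : ℤ) :
    ∃ (s : ℤ) (j : Fin q), i = q * s + (j : ℤ) - ν := by
  have hq' : (0 : ℤ) < q := by exact_mod_cast hq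
  have hlt := Int.emod_lt_of_pos (i + ν) hq'
  have hnonneg := Int.emod_nonneg (i + ν) hq'.ne'
  refine ⟨(i + ν) / q, ⟨((i + ν) % q).toNat, by omega⟩, ?_⟩
  have := Int.mul_ediv_add_emod (i + ν) q
  simp only [Int.toNat_of_nonneg hnonneg]
  omega

section

variable {R M ι : Type*} [Semiring R] [AddCommMonoid M] [Module R M]

theorem Submodule.forall_mem_of_forall_gt_exists_lt {W : Submodule R M} {C : ι → M →ₗ[R] M}
    (hC : ∀ j, W.map (C j) ≤ W) {G : ℤ → M} {a : ℤ} (hbase : ∀ m ≤ a, G m ∈ W)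
    (hstep : ∀ m > a, ∃ j t, t < m ∧ G m = C j (G t)) (m : ℤ) : G m ∈ W := by
  induction m using Int.strongRec (m := a + 1) with
  | lt m hm => exact hbase m (by omega)
  | ge m hm ih =>
    obtain ⟨j, t, htm, hGm⟩ := hstep m (by omega)
    exact hGm ▸ hC j (Submodule.mem_map_of_mem (ih t htm))

theorem apply_mem_span_image_Icc_of_rec {q e : ℕ} {ν a : ℤ} {G : ℤ → M}
    (hneg : ∀ l : ℤ, l < 0 → G l = 0) {C : Fin q → M →ₗ[R] M}
    (hrec : ∀ i s : ℤ, ∀ j : Fin q, i = q * s + (j : ℤ) - ν →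
      G i = C j (G (s - (e : ℤ) + 1)))
    (j : Fin q) {t : ℤ} (hta : t ≤ a) :
    C j (G t) ∈ Submodule.span R (G '' Icc 0 (q * (a + (e : ℤ)) - ν - 1)) := by
  set i : ℤ := q * (t + e - 1) + (j : ℤ) - ν
  have hGi : G i = C j (G t) := by
    simpa only [show t + e - 1 - e + 1 = t by ring] using hrec i (t + e - 1) j rfl
  rw [← hGi]
  rcases lt_or_ge i 0 with hi | hi
  · simp [hneg i hi]
  · have hj : (j : ℤ) < q := by exact_mod_cast j.isLt
    have : (q : ℤ) * (t + e - 1) ≤ q * (a + e - 1) := by gcongr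
    exact Submodule.subset_span ⟨i, ⟨hi, by linarith⟩, rfl⟩

end

theorem stabilization_lemma_general
    (k : Type*) [Field k] (V : Type*) [AddCommGroup V] [Module k V]
    (q e : ℕ) (hq : 2 ≤ q)
    (ν a : ℤ)
    (G : ℤ → V) (hneg : ∀ l : ℤ, l < 0 → G l = 0)
    (C : Fin q → (V →ₗ[k] V))
    -- the recursion `G_{qs+j−ν} = C_j (G_{s−e+1})`
    (hrec : ∀ i s : ℤ, ∀ j : Fin q, i = q * s + (j : ℤ) - ν →
      G i = C j (G (s - (e : ℤ) + 1)))
    -- the predecessor index decreases strictly beyond `a`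
    (hdec : ∀ i s : ℤ, ∀ j : Fin q, a < i → i = q * s + (j : ℤ) - ν →
      s - (e : ℤ) + 1 < i)
    -- the chain `V_l := span{G_m : 0 ≤ m ≤ l}`
    (Vl : ℤ → Submodule k V)
    (hVl : ∀ l : ℤ, Vl l = Submodule.span k (G '' {m : ℤ | 0 ≤ m ∧ m ≤ l}))
    (hstat : Vl a = Vl (q * (a + (e : ℤ)) - ν - 1)) :
    ∀ l : ℤ, a ≤ l → Vl l = Vl a := by
  have hinv : ∀ j, (Vl a).map (C j) ≤ Vl a := fun j => by
    conv_lhs => rw [hVl a]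
    rw [Submodule.map_span_le, hstat, hVl]
    rintro _ ⟨t, ⟨-, hta⟩, rfl⟩
    exact apply_mem_span_image_Icc_of_rec hneg hrec j hta
  have hbase : ∀ m ≤ a, G m ∈ Vl a := fun m hma => by
    rcases lt_or_ge m 0 with hm | hm
    · simp [hneg m hm]
    · exact hVl a ▸ Submodule.subset_span ⟨m, ⟨hm, hma⟩, rfl⟩
  have hstep : ∀ m > a, ∃ j t, t < m ∧ G m = C j (G t) := fun m hma => by
    obtain ⟨s, j, hm⟩ := Int.exists_eq_mul_add_fin_sub (q := q) (by omega) ν m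
    exact ⟨j, s - e + 1, hdec m s j hma hm, hrec m s j hm⟩
  intro l hl
  apply le_antisymm
  · rw [hVl l, Submodule.span_le]
    rintro _ ⟨m, -, rfl⟩
    exact Submodule.forall_mem_of_forall_gt_exists_lt hinv hbase hstep m
  · rw [hVl l, hVl a]
    exact Submodule.span_mono (image_mono fun m hm => ⟨hm.1, hm.2.trans hl⟩)

/-- **Stabilization lemma.** Let `V` be a finite-dimensional vector space,
`C₀,…,C_{q−1}` endomorphisms of `V`, and `(G_i)_{i ∈ ℤ}` vectors with `G_i = 0` for
`i < 0`, satisfying the recursion: writing `i = q·s + j − ν` with `0 ≤ j < q`, one has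
`G_i = C_j (G_{s−e+1})`, the predecessor index being `< i` whenever `i > a`.
Set `V_l := span{G_m : 0 ≤ m ≤ l}`.  If `a ≥ (ν−d)/(q−1)` and
`V_a = V_{q(a+e)−ν−1}`, then `V_l = V_a` for every `l ≥ a`. -/
theorem stabilization_lemma
    (k : Type*) [Field k] (V : Type*) [AddCommGroup V] [Module k V]
    [FiniteDimensional k V]
    (q e : ℕ) (hq : 2 ≤ q) (he : 1 ≤ e)
    (ν d a : ℤ) (hν : 0 ≤ ν)
    (G : ℤ → V) (hneg : ∀ l : ℤ, l < 0 → G l = 0)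
    (C : Fin q → (V →ₗ[k] V))
    -- the recursion `G_{qs+j−ν} = C_j (G_{s−e+1})`
    (hrec : ∀ i s : ℤ, ∀ j : Fin q, i = q * s + (j : ℤ) - ν →
      G i = C j (G (s - (e : ℤ) + 1)))
    -- the predecessor index decreases strictly beyond `a`
    (hdec : ∀ i s : ℤ, ∀ j : Fin q, a < i → i = q * s + (j : ℤ) - ν →
      s - (e : ℤ) + 1 < i)
    -- `a ≥ (ν − d)/(q − 1)`
    (ha : ν - d ≤ ((q : ℤ) - 1) * a)
    -- the chain `V_l := span{G_m : 0 ≤ m ≤ l}`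
    (Vl : ℤ → Submodule k V)
    (hVl : ∀ l : ℤ, Vl l = Submodule.span k (G '' {m : ℤ | 0 ≤ m ∧ m ≤ l}))
    (hstat : Vl a = Vl (q * (a + (e : ℤ)) - ν - 1)) :
    ∀ l : ℤ, a ≤ l → Vl l = Vl a :=
  stabilization_lemma_general k V q e hq ν a G hneg C hrec hdec Vl hVl hstat
end

section
/- Let k be a field, q ≥ 2, and let f₁(z),…,fₙ(z) ∈ k[[z]] satisfy a Mahler system f(z) = A(z)f(z^q) with A(z) ∈ GLₙ(k(z)). Let b(z) be a common denominator so that b(z)A(z) has polynomial entries of degree at most d, and suppose additionally b(z) = z^ν is a monomial (so A(z) = z^{−ν}Ã(z) with Ã polynomial of degree ≤ d). Suppose the fᵢ are linearly dependent over k(z). Then there exists a nonzero vector (w₁(z),…,wₙ(z)) ∈ k[z]ⁿ with deg wᵢ ≤ ⌊d/(q−1)⌋ for all i and w₁(z)f₁(z) + ⋯ + wₙ(z)fₙ(z) = 0. -/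
open scoped BigOperators

/-- Substitution `z ↦ z^q` on formal power series. -/
noncomputable def expandPS {R : Type*} [CommSemiring R] (q : ℕ) (f : PowerSeries R) :
    PowerSeries R :=
  PowerSeries.mk fun n => if q ∣ n then PowerSeries.coeff (n / q) f else 0

/-!
Among all nonzero polynomial relations `∑ wᵢ fᵢ = 0` choose one of minimal degree `h`.
Multiplying by `z^ν` and substituting the system turns it into the relation
`∑ⱼ (w Ã)ⱼ fⱼ(z^q) = 0` of degree `≤ h + d`, still nonzero because `det Ã ≠ 0`.
Splitting the coefficients of `w Ã` by residue classes modulo `q`, some class is nonzero, and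
each class gives a relation among the `fⱼ(z)` themselves, of degree `≤ (h + d) / q`.
Minimality forces `h ≤ (h + d) / q`, i.e. `h ≤ d / (q - 1)`.
-/

open Polynomial
open scoped PowerSeries

theorem expandPS_eq_expand {R : Type*} [CommRing R] {q : ℕ} (hq : q ≠ 0) (f : R⟦X⟧) :
    expandPS q f = PowerSeries.expand q hq f := by
  ext m
  simp [expandPS, PowerSeries.coeff_expand]

namespace Polynomial

variable {R : Type*} [CommRing R]

/-- The coefficients of `u` in the residue class `r` modulo `q`, i.e. `∑ₐ u_{aq+r} Xᵃ`;
for `r = 0` this is `Polynomial.contract q u`. -/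
noncomputable def decimate (q r : ℕ) (u : R[X]) : R[X] :=
  ∑ a ∈ Finset.range (u.natDegree + 1), monomial a (u.coeff (a * q + r))

variable {q : ℕ} (r : ℕ) (u : R[X])

theorem coeff_decimate (hq : q ≠ 0) (a : ℕ) :
    (decimate q r u).coeff a = u.coeff (a * q + r) := by
  simp only [decimate, finsetSum_coeff, coeff_monomial, Finset.sum_ite_eq', Finset.mem_range,
    ite_eq_left_iff, not_lt]
  intro ha
  refine (coeff_eq_zero_of_natDegree_lt ?_).symm
  have : a ≤ a * q := Nat.le_mul_of_pos_right a (Nat.pos_of_ne_zero hq)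
  omega

theorem natDegree_decimate_le (hq : q ≠ 0) :
    (decimate q r u).natDegree ≤ u.natDegree / q := by
  refine natDegree_le_iff_coeff_eq_zero.mpr fun a ha => ?_
  rw [coeff_decimate r u hq]
  refine coeff_eq_zero_of_natDegree_lt ?_
  have := (Nat.div_lt_iff_lt_mul (Nat.pos_of_ne_zero hq)).mp ha
  omega

theorem coeff_decimate_mul_eq_coeff_mul_expand (hq : q ≠ 0) (hr : r < q) (g : R⟦X⟧)
    (m : ℕ) : PowerSeries.coeff m ((decimate q r u : R⟦X⟧) * g) =
      PowerSeries.coeff (m * q + r) ((u : R⟦X⟧) * PowerSeries.expand q hq g) := by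
  have hq' : 0 < q := Nat.pos_of_ne_zero hq
  rw [PowerSeries.coeff_mul, PowerSeries.coeff_mul]
  -- On the right only the terms `(a * q + r, q * b)` survive, as `expand` vanishes off `q ∣ ·`.
  refine Finset.sum_of_injOn (fun p => (p.1 * q + r, q * p.2)) ?_ ?_ ?_ ?_
  · rintro ⟨a, b⟩ - ⟨a', b'⟩ - h
    obtain ⟨ha, hb⟩ := Prod.mk.inj h
    exact Prod.ext (Nat.eq_of_mul_eq_mul_right hq' (Nat.add_right_cancel ha))
      (Nat.eq_of_mul_eq_mul_left hq' hb)
  · rintro ⟨a, b⟩ hab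
    simp only [Finset.mem_coe, Finset.HasAntidiagonal.mem_antidiagonal] at hab ⊢
    rw [← hab]
    ring
  · rintro ⟨a, b⟩ hab hnot
    rw [PowerSeries.coeff_expand_of_not_dvd, mul_zero]
    rintro ⟨c, rfl⟩
    simp only [Finset.HasAntidiagonal.mem_antidiagonal] at hab
    have hc : c ≤ m := by
      by_contra! hcm
      nlinarith
    refine hnot ⟨(m - c, c), by simp [Finset.HasAntidiagonal.mem_antidiagonal, hc], ?_⟩
    simp only [Prod.mk.injEq, and_true]
    zify [hc] at hab ⊢
    linear_combination -hab
  · rintro ⟨a, b⟩ -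
    simp [coeff_decimate r u hq]

theorem exists_decimate_ne_zero {ι : Type*} (hq : q ≠ 0) {w : ι → R[X]} (hw : w ≠ 0) :
    ∃ r < q, (fun j => decimate q r (w j)) ≠ 0 := by
  obtain ⟨j, hj⟩ := Function.ne_iff.mp hw
  obtain ⟨N, hN⟩ := not_forall.mp (Polynomial.ext_iff.not.mp hj)
  refine ⟨N % q, Nat.mod_lt N (Nat.pos_of_ne_zero hq), fun h0 => hN ?_⟩
  simpa [coeff_decimate _ _ hq, Nat.div_add_mod'] using
    congr_arg (coeff · (N / q)) (congr_fun h0 j)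

end Polynomial

section Relations

variable {R : Type*} [CommRing R] {ι : Type*} [Fintype ι]

def HasRelationOfDegreeLE (f : ι → R⟦X⟧) (h : ℕ) : Prop :=
  ∃ w : ι → R[X], w ≠ 0 ∧ (∀ i, (w i).natDegree ≤ h) ∧
    ∑ i, (w i : R⟦X⟧) * f i = 0

variable {f : ι → R⟦X⟧} {h : ℕ}

theorem HasRelationOfDegreeLE.mono {h' : ℕ} (hf : HasRelationOfDegreeLE f h) (hh : h ≤ h') :
    HasRelationOfDegreeLE f h' :=
  let ⟨w, hw0, hwdeg, hw⟩ := hf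
  ⟨w, hw0, fun i => (hwdeg i).trans hh, hw⟩

theorem sum_coe_vecMul_mul (w : ι → R[X]) (A : Matrix ι ι R[X]) (F : ι → R⟦X⟧) :
    ∑ j, ((Matrix.vecMul w A) j : R⟦X⟧) * F j =
      ∑ i, (w i : R⟦X⟧) * ∑ j, (A i j : R⟦X⟧) * F j := by
  simp only [Matrix.vecMul, dotProduct, ← coeToPowerSeries.ringHom_apply, map_sum, map_mul,
    Finset.sum_mul, Finset.mul_sum, mul_assoc]
  exact Finset.sum_comm

theorem HasRelationOfDegreeLE.of_mahler_system [IsDomain R] [DecidableEq ι] {F : ι → R⟦X⟧}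
    {A : Matrix ι ι R[X]} {d ν : ℕ} (hdeg : ∀ i j, (A i j).natDegree ≤ d)
    (hdet : A.det ≠ 0)
    (hsys : ∀ i, PowerSeries.X ^ ν * f i = ∑ j, (A i j : R⟦X⟧) * F j)
    (hf : HasRelationOfDegreeLE f h) : HasRelationOfDegreeLE F (h + d) := by
  obtain ⟨w, hw0, hwdeg, hw⟩ := hf
  refine ⟨Matrix.vecMul w A,
    fun h0 => hdet (Matrix.exists_vecMul_eq_zero_iff.mp ⟨w, hw0, h0⟩), fun j => ?_, ?_⟩
  · refine natDegree_sum_le_of_forall_le _ _ fun i _ => ?_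
    exact natDegree_mul_le.trans (add_le_add (hwdeg i) (hdeg i j))
  · simp only [sum_coe_vecMul_mul, ← hsys, mul_left_comm _ (PowerSeries.X ^ ν),
      ← Finset.mul_sum, hw, mul_zero]

theorem HasRelationOfDegreeLE.of_expand {q : ℕ} (hq : q ≠ 0)
    (hf : HasRelationOfDegreeLE (fun j => PowerSeries.expand q hq (f j)) h) :
    HasRelationOfDegreeLE f (h / q) := by
  obtain ⟨u, hu0, hudeg, hu⟩ := hf
  obtain ⟨r, hr, hv0⟩ := exists_decimate_ne_zero hq hu0
  refine ⟨fun j => decimate q r (u j), hv0,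
    fun j => (natDegree_decimate_le r _ hq).trans (Nat.div_le_div_right (hudeg j)), ?_⟩
  ext m
  simpa only [map_sum, map_zero, ← coeff_decimate_mul_eq_coeff_mul_expand r _ hq hr] using
    congr_arg (PowerSeries.coeff (m * q + r)) hu

end Relations

theorem exists_hasRelationOfDegreeLE {k : Type*} [Field k] {ι : Type*} [Fintype ι]
    {f : ι → k⟦X⟧} (hdep : ∃ w : ι → RatFunc k, w ≠ 0 ∧
      ∑ i, (w i : LaurentSeries k) * (f i : LaurentSeries k) = 0) :
    ∃ h, HasRelationOfDegreeLE f h := by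
  obtain ⟨w, hw0, hw⟩ := hdep
  obtain ⟨b, hb⟩ := IsLocalization.exist_integer_multiples_of_finite (nonZeroDivisors k[X]) w
  choose p hp using hb
  refine ⟨Finset.univ.sup fun i => (p i).natDegree, p, fun hp0 => hw0 (funext fun i => ?_),
    fun i => Finset.le_sup (f := fun i => (p i).natDegree) (Finset.mem_univ i), ?_⟩
  · have hbw := hp i
    rw [hp0, Pi.zero_apply, map_zero, eq_comm, Algebra.smul_def, mul_eq_zero] at hbw
    exact hbw.resolve_left (RatFunc.algebraMap_ne_zero (nonZeroDivisors.coe_ne_zero b))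
  · apply HahnSeries.ofPowerSeries_injective (Γ := ℤ)
    have hcoe : ∀ i, HahnSeries.ofPowerSeries ℤ k (p i) =
        (algebraMap k[X] (RatFunc k) b : LaurentSeries k) * (w i : LaurentSeries k) := fun i => by
      rw [← map_mul, ← Algebra.smul_def, ← hp i]
      exact RatFunc.coe_coe (p i)
    simp only [map_sum, map_mul, hcoe, mul_assoc, ← Finset.mul_sum, hw, mul_zero, map_zero]

theorem le_div_sub_one_of_le_add_div {q h d : ℕ} (hq : 1 < q) (hh : h ≤ (h + d) / q) :
    h ≤ d / (q - 1) := by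
  rw [Nat.le_div_iff_mul_le (by omega)]
  have hhq : h * q ≤ h + d := (Nat.le_div_iff_mul_le (by omega)).mp hh
  have hqh : h ≤ h * q := Nat.le_mul_of_pos_right h (by omega)
  rw [Nat.mul_sub_one]
  omega

/-- **Small-degree relation lemma.** If `f₁,…,fₙ ∈ k[[z]]` satisfy a Mahler system
`z^ν f(z) = Ã(z) f(z^q)` with `Ã` a polynomial matrix of degree `≤ d` and `det Ã ≠ 0`
(i.e. `f(z) = A(z) f(z^q)` with `A = z^{−ν}Ã ∈ GLₙ(k(z))`), and if the `fᵢ` are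
linearly dependent over `k(z)`, then there is a nonzero polynomial relation
`∑ wᵢ(z) fᵢ(z) = 0` with `deg wᵢ ≤ ⌊d/(q−1)⌋`. -/
theorem small_degree_relation
    (k : Type*) [Field k]
    (q : ℕ) (hq : 2 ≤ q)
    (n : ℕ) (f : Fin n → PowerSeries k)
    (Atil : Matrix (Fin n) (Fin n) (Polynomial k))
    (d ν : ℕ)
    (hdeg : ∀ i j, (Atil i j).natDegree ≤ d)
    (hdet : Atil.det ≠ 0)
    (hsys : ∀ i, (PowerSeries.X : PowerSeries k) ^ ν * f i =
      ∑ j, ((Atil i j : PowerSeries k) * expandPS q (f j)))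
    -- the `fᵢ` are linearly dependent over `k(z)`
    (hdep : ∃ w : Fin n → RatFunc k, w ≠ 0 ∧
      (∑ i, (w i : LaurentSeries k) * ((f i : LaurentSeries k))) = 0) :
    ∃ w : Fin n → Polynomial k, w ≠ 0 ∧
      (∀ i, (w i).natDegree ≤ d / (q - 1)) ∧
      (∑ i, ((w i : PowerSeries k) * f i)) = 0 := by
  classical
  have hq0 : q ≠ 0 := by omega
  simp only [expandPS_eq_expand hq0] at hsys
  have hex := exists_hasRelationOfDegreeLE hdep
  have hmin : Nat.find hex ≤ (Nat.find hex + d) / q :=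
    Nat.find_min' hex (((Nat.find_spec hex).of_mahler_system hdeg hdet hsys).of_expand hq0)
  exact (Nat.find_spec hex).mono (le_div_sub_one_of_le_add_div hq hmin)
end

section
/- Let aₙ ∈ {0,1} be defined by aₙ = 1 iff the base-3 expansion of n contains an odd number of digits 2, and set f₁(z)=Σaₙzⁿ, f₂(z)=Σ(1−aₙ)zⁿ ∈ ℚ[[z]]. Then f₁ and f₂ are linearly independent over ℚ(z): there is no nonzero pair (w₁(z), w₂(z)) ∈ ℚ(z)² with w₁(z)f₁(z)+w₂(z)f₂(z)=0. -/
/-!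
Appending the digit `2` flips the parity, so `a (3n + 2) ≠ a n`; hence `a` is not eventually
periodic: with period `T` from `N`, any `n ≥ N` with `n ≡ -1 (mod T)` has `3n + 2 ≡ n (mod T)`.
On the other hand, if `q f = p` for polynomials `q ≠ 0` and `p`, then beyond `deg p` the
coefficients of `f` satisfy a linear recurrence determining each from the `L` preceding ones; if
they take finitely many values, some window of length `L` recurs, and from there on the
coefficients are periodic. So `f₁` is not a rational function. Since `f₁ + f₂ = 1 / (1 - z)`, a
relation `w₁ f₁ + w₂ f₂ = 0` becomes `(w₁ - w₂) (1 - z) f₁ = -w₂`, which forces `w₁ = w₂`, and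
then `w₂ = 0`.
-/

/-- `aSeq n = 1` iff the base-3 expansion of `n` contains an odd number of digits `2`. -/
def aSeq (n : ℕ) : ℕ := ((Nat.digits 3 n).count 2) % 2

/-- Generating series of `aSeq`. -/
noncomputable def fOne : PowerSeries ℚ := PowerSeries.mk fun n => (aSeq n : ℚ)

/-- Generating series of `1 − aSeq`. -/
noncomputable def fTwo : PowerSeries ℚ := PowerSeries.mk fun n => 1 - (aSeq n : ℚ)

open Polynomial Finset
open scoped LaurentSeries PowerSeries

theorem aSeq_three_mul_add_two_ne (n : ℕ) : aSeq (3 * n + 2) ≠ aSeq n := by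
  have hdigits : Nat.digits 3 (3 * n + 2) = 2 :: Nat.digits 3 n := by
    rw [add_comm, Nat.digits_add 3 (by norm_num) 2 n (by norm_num) (by simp)]
  simp only [aSeq, hdigits, List.count_cons_self]
  omega

theorem not_periodic_shift_of_three_mul_add_two_ne {α : Type*} {u : ℕ → α}
    (hu : ∀ n, u (3 * n + 2) ≠ u n) (N : ℕ) {T : ℕ} (hT : 0 < T) :
    ¬ Function.Periodic (fun n => u (N + n)) T := by
  intro hper
  obtain ⟨T, rfl⟩ := Nat.exists_eq_add_one_of_ne_zero hT.ne'
  apply hu (N + T * (N + 1))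
  convert hper.nat_mul (2 * (N + 1)) (T * (N + 1)) using 2
  push_cast
  ring

theorem exists_periodic_shift_of_window_determines {α : Type*} {u : ℕ → α}
    (hu : (Set.range u).Finite) {L m₀ : ℕ}
    (H : ∀ m m', m₀ ≤ m → m₀ ≤ m' → (∀ i < L, u (m + i) = u (m' + i)) → u (m + L) = u (m' + L)) :
    ∃ N T, 0 < T ∧ Function.Periodic (fun n => u (N + n)) T := by
  have : Finite (Set.range u) := hu
  obtain ⟨x, y, hxy, hwin⟩ := Finite.exists_ne_map_eq_of_infinite
    fun m (i : Fin L) => (⟨u (m₀ + m + i), Set.mem_range_self _⟩ : Set.range u)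
  wlog hlt : x < y generalizing x y
  · exact this y x hxy.symm hwin.symm (by omega)
  have hagree : ∀ t, u (m₀ + x + t) = u (m₀ + y + t) := by
    intro t
    induction t using Nat.strong_induction_on with
    | _ t ih =>
      rcases lt_or_ge t L with htL | htL
      · simpa using congrFun hwin ⟨t, htL⟩
      · obtain ⟨s, rfl⟩ := Nat.exists_eq_add_of_le' htL
        simpa only [add_assoc] using H (m₀ + x + s) (m₀ + y + s) (by omega) (by omega)
          fun i hi => by simpa only [add_assoc] using ih (s + i) (by omega)
  refine ⟨m₀ + x, y - x, by omega, fun t => ?_⟩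
  dsimp only
  rw [show m₀ + x + (t + (y - x)) = m₀ + y + t by omega, hagree]

namespace PowerSeries

variable {R : Type*}

theorem coeff_coe_mul_of_natDegree_le [CommSemiring R] (q : R[X]) (F : R⟦X⟧) {n : ℕ}
    (hn : q.natDegree ≤ n) :
    coeff n ((q : R⟦X⟧) * F) = ∑ i ∈ range (q.natDegree + 1), q.coeff i * coeff (n - i) F := by
  rw [coeff_mul, Nat.sum_antidiagonal_eq_sum_range_succ fun i j => coeff i (q : R⟦X⟧) * coeff j F]
  simp only [Polynomial.coeff_coe]
  refine (sum_subset (range_subset_range.2 (by omega)) fun i _ hi => ?_).symm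
  rw [coeff_eq_zero_of_natDegree_lt (by simpa using hi), zero_mul]

/-- With `q = ∑_{j₀ ≤ i ≤ d} qᵢ Xⁱ`, the vanishing coefficient of `X^(m + d)` in `q F` is
`q_{j₀} F_{m + L} + ∑_{i > j₀} qᵢ F_{m + d - i}` with `L = d - j₀`. -/
theorem coeff_add_eq_of_coe_mul_eq [CommRing R] [NoZeroDivisors R] {F : R⟦X⟧} {p q : R[X]}
    (hq : q ≠ 0) (h : (q : R⟦X⟧) * F = p) {m m' : ℕ} (hm : p.natDegree < m)
    (hm' : p.natDegree < m')
    (hwin : ∀ i < q.natDegree - q.natTrailingDegree, coeff (m + i) F = coeff (m' + i) F) :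
    coeff (m + (q.natDegree - q.natTrailingDegree)) F =
      coeff (m' + (q.natDegree - q.natTrailingDegree)) F := by
  set d := q.natDegree
  set j₀ := q.natTrailingDegree
  have hj₀ : j₀ ≤ d := natTrailingDegree_le_natDegree q
  have hrec : ∀ n, p.natDegree < n →
      ∑ i ∈ range (d + 1), q.coeff i * coeff (n + d - i) F = 0 := by
    intro n hn
    rw [← coeff_coe_mul_of_natDegree_le q F (by omega), h, Polynomial.coeff_coe,
      coeff_eq_zero_of_natDegree_lt (by omega)]
  have hdiff : ∑ i ∈ range (d + 1),
      q.coeff i * (coeff (m + d - i) F - coeff (m' + d - i) F) = 0 := by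
    simp only [mul_sub, sum_sub_distrib, hrec m hm, hrec m' hm', sub_zero]
  rw [sum_eq_single j₀ (fun i hi hij => ?_) (fun hj => absurd (mem_range.2 (by omega)) hj)]
    at hdiff
  · have := sub_eq_zero.1
      ((mul_eq_zero.1 hdiff).resolve_left (trailingCoeff_nonzero_iff_nonzero.2 hq))
    rwa [show m + d - j₀ = m + (d - j₀) by omega, show m' + d - j₀ = m' + (d - j₀) by omega]
      at this
  · rcases lt_or_gt_of_ne hij with hlt | hgt
    · rw [coeff_eq_zero_of_lt_natTrailingDegree hlt, zero_mul]
    · have hid : i ≤ d := Nat.lt_succ_iff.1 (mem_range.1 hi)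
      rw [show m + d - i = m + (d - i) by omega, show m' + d - i = m' + (d - i) by omega,
        hwin _ (by omega), sub_self, mul_zero]

theorem exists_periodic_shift_coeff_of_coe_mul_eq [CommRing R] [NoZeroDivisors R] {F : R⟦X⟧}
    (hF : (Set.range fun n => coeff n F).Finite) {p q : R[X]} (hq : q ≠ 0)
    (h : (q : R⟦X⟧) * F = p) :
    ∃ N T, 0 < T ∧ Function.Periodic (fun n => coeff (N + n) F) T :=
  exists_periodic_shift_of_window_determines hF (m₀ := p.natDegree + 1)
    fun _ _ hm hm' hwin => coeff_add_eq_of_coe_mul_eq hq h hm hm' hwin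

end PowerSeries

theorem RatFunc.exists_coe_mul_eq_of_coe_eq {K : Type*} [Field K] {F : K⟦X⟧} {r : RatFunc K}
    (h : (r : K⸨X⸩) = F) : ∃ p q : K[X], q ≠ 0 ∧ (q : K⟦X⟧) * F = p := by
  refine ⟨r.num, r.denom, r.denom_ne_zero, HahnSeries.ofPowerSeries_injective (Γ := ℤ) ?_⟩
  have hden : ((r.denom : RatFunc K) : K⸨X⸩) ≠ 0 :=
    (_root_.map_ne_zero _).2 (RatFunc.algebraMap_ne_zero r.denom_ne_zero)
  have hr : (r : K⸨X⸩) = ((r.num : RatFunc K) : K⸨X⸩) / ((r.denom : RatFunc K) : K⸨X⸩) := by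
    rw [← map_div₀]
    exact congrArg _ r.num_div_denom.symm
  rw [map_mul, RatFunc.coe_coe, RatFunc.coe_coe, ← h, hr, mul_div_cancel₀ _ hden]

theorem finite_range_coeff_fOne : (Set.range fun n => PowerSeries.coeff n fOne).Finite := by
  have hfin : (Set.range aSeq).Finite :=
    (Set.finite_Iio 2).subset (Set.range_subset_iff.2 fun n => Nat.mod_lt _ two_pos)
  simp only [fOne, PowerSeries.coeff_mk]
  exact Set.range_comp ((↑) : ℕ → ℚ) aSeq ▸ hfin.image _

theorem fOne_ne_coe_ratFunc (r : RatFunc ℚ) : (r : ℚ⸨X⸩) ≠ fOne := by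
  intro h
  obtain ⟨p, q, hq, hpq⟩ := r.exists_coe_mul_eq_of_coe_eq h
  obtain ⟨N, T, hT, hper⟩ :=
    PowerSeries.exists_periodic_shift_coeff_of_coe_mul_eq finite_range_coeff_fOne hq hpq
  refine not_periodic_shift_of_three_mul_add_two_ne aSeq_three_mul_add_two_ne N hT fun n => ?_
  simpa [fOne] using hper n

theorem fOne_add_fTwo : fOne + fTwo = PowerSeries.mk 1 := by
  ext n
  simp [fOne, fTwo]

/-- `f₁` and `f₂` are linearly independent over `ℚ(z)`: there is no nonzero pair of
rational functions `(w₁,w₂)` with `w₁(z)f₁(z) + w₂(z)f₂(z) = 0`. -/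
theorem thueMorse_variant_linearIndependent :
    ∀ w₁ w₂ : RatFunc ℚ,
      (w₁ : LaurentSeries ℚ) * ((fOne : LaurentSeries ℚ))
        + (w₂ : LaurentSeries ℚ) * ((fTwo : LaurentSeries ℚ)) = 0 →
      w₁ = 0 ∧ w₂ = 0 := by
  intro w₁ w₂ h
  set s : ℚ⸨X⸩ := ((1 - RatFunc.X : RatFunc ℚ) : ℚ⸨X⸩)
  have hgeom : ((fOne : ℚ⸨X⸩) + fTwo) * s = 1 := by
    have hs : s = ((1 - PowerSeries.X : ℚ⟦X⟧) : ℚ⸨X⸩) := by simp [s]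
    rw [hs, ← map_add, ← map_mul, fOne_add_fTwo, PowerSeries.mk_one_mul_one_sub_eq_one, map_one]
  have hrel : ((w₁ : ℚ⸨X⸩) - w₂) * s * fOne + w₂ = 0 := by
    linear_combination s * h - (w₂ : ℚ⸨X⸩) * hgeom
  have hw : w₁ = w₂ := by
    by_contra hne
    have hne' : ((w₁ : ℚ⸨X⸩) - w₂) * s ≠ 0 :=
      mul_ne_zero (by rwa [← map_sub, _root_.map_ne_zero, sub_ne_zero])
        (right_ne_zero_of_mul_eq_one hgeom)
    apply fOne_ne_coe_ratFunc (-w₂ / ((w₁ - w₂) * (1 - RatFunc.X)))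
    rw [map_div₀, map_neg, map_mul, map_sub _ w₁ w₂, div_eq_iff hne']
    linear_combination -hrel
  subst hw
  simpa using hrel
end

section
/- Let φ = (1−√5)/2 and let f₁, f₂ ∈ ℚ[[z]] be the generating series of the sequence aₙ (aₙ = parity of the number of 2's in base-3 expansion of n) and of 1−aₙ respectively; both converge on |z| < 1. Using the functional system (f₁(z),f₂(z))ᵀ = A(z)(f₁(z³),f₂(z³))ᵀ with A(z)=[[1+z,z²],[z²,1+z]] and the relation f₁+f₂ = 1/(1−z), prove: f₁(φ) = f₂(φ) and consequently f₁(φ) = −φ/2 ∈ ℚ(√5). -/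
open scoped Real

open Real goldenRatio

theorem Nat.count_digits_add_mul {b d : ℕ} (hb : 1 < b) (hd : d ≠ 0) {r : ℕ} (hr : r < b)
    (m : ℕ) :
    (Nat.digits b (r + b * m)).count d = (Nat.digits b m).count d + if r = d then 1 else 0 := by
  rcases eq_or_ne r 0 with rfl | hr0
  · rcases eq_or_ne m 0 with rfl | hm
    · simp [Ne.symm hd]
    · rw [Nat.digits_add b hb 0 m hr (.inr hm), List.count_cons]
      simp [Ne.symm hd]
  · rw [Nat.digits_add b hb r m hr (.inl hr0), List.count_cons]
    simp only [beq_iff_eq]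

theorem summable_mul_pow_of_abs_le {c : ℕ → ℝ} {C z : ℝ} (hc : ∀ n, |c n| ≤ C) (hz : |z| < 1) :
    Summable fun n ↦ c n * z ^ n := by
  refine .of_norm_bounded ((summable_geometric_of_abs_lt_one hz).abs.mul_left C) fun n ↦ ?_
  rw [norm_mul, norm_pow, Real.norm_eq_abs, Real.norm_eq_abs, abs_pow]
  exact mul_le_mul_of_nonneg_right (hc n) (by positivity)

theorem abs_goldenConj_lt_one : |ψ| < 1 :=
  abs_lt.2 ⟨neg_one_lt_goldenConj, goldenConj_neg.trans one_pos⟩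

def digitTwoSign (n : ℕ) : ℝ := (-1) ^ (Nat.digits 3 n).count 2

theorem abs_digitTwoSign (n : ℕ) : |digitTwoSign n| = 1 := by
  simp [digitTwoSign]

theorem aSeq_eq_one_sub_digitTwoSign_div_two (n : ℕ) :
    (aSeq n : ℝ) = (1 - digitTwoSign n) / 2 := by
  rw [digitTwoSign, neg_one_pow_eq_pow_mod_two, aSeq]
  rcases Nat.mod_two_eq_zero_or_one ((Nat.digits 3 n).count 2) with h | h <;> norm_num [h]

theorem digitTwoSign_add_three_mul {r : ℕ} (hr : r < 3) (m : ℕ) :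
    digitTwoSign (r + 3 * m) = (if r = 2 then -1 else 1) * digitTwoSign m := by
  rw [digitTwoSign, Nat.count_digits_add_mul (by norm_num) two_ne_zero hr, pow_add, mul_comm]
  split_ifs <;> simp [digitTwoSign]

theorem tsum_digitTwoSign_mul_pow {z : ℝ} (hz : |z| < 1) :
    ∑' n, digitTwoSign n * z ^ n = (1 + z - z ^ 2) * ∑' m, digitTwoSign m * (z ^ 3) ^ m := by
  have hsum := summable_mul_pow_of_abs_le (fun n ↦ (abs_digitTwoSign n).le) hz
  have hterm : ∀ r < 3, ∀ m, digitTwoSign (r + 3 * m) * z ^ (r + 3 * m) =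
      ((if r = 2 then -1 else 1) * z ^ r) * (digitTwoSign m * (z ^ 3) ^ m) := fun r hr m ↦ by
    rw [digitTwoSign_add_three_mul hr]; ring
  obtain ⟨h0, h1, h2⟩ :
      (0 : ZMod 3).val = 0 ∧ (1 : ZMod 3).val = 1 ∧ (2 : ZMod 3).val = 2 := ⟨rfl, rfl, rfl⟩
  rw [Nat.sumByResidueClasses hsum 3,
    show ∀ f : ZMod 3 → ℝ, ∑ j, f j = f 0 + f 1 + f 2 from Fin.sum_univ_three]
  simp only [h0, h1, h2, hterm _ (by norm_num : 0 < 3), hterm _ (by norm_num : 1 < 3),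
    hterm _ (by norm_num : 2 < 3), tsum_mul_left]
  norm_num
  ring

theorem tsum_digitTwoSign_mul_goldenConj_pow : ∑' n, digitTwoSign n * ψ ^ n = 0 := by
  rw [tsum_digitTwoSign_mul_pow abs_goldenConj_lt_one, goldenConj_sq]
  ring

section GeneratingSeries

variable {z : ℝ} (hz : |z| < 1)
include hz

theorem tsum_aSeq_mul_pow :
    ∑' n, (aSeq n : ℝ) * z ^ n = ((1 - z)⁻¹ - ∑' n, digitTwoSign n * z ^ n) / 2 := by
  have hsum := summable_mul_pow_of_abs_le (fun n ↦ (abs_digitTwoSign n).le) hz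
  simp only [aSeq_eq_one_sub_digitTwoSign_div_two, div_mul_eq_mul_div, sub_mul, one_mul]
  rw [tsum_div_const, (summable_geometric_of_abs_lt_one hz).tsum_sub hsum,
    tsum_geometric_of_abs_lt_one hz]

theorem tsum_one_sub_aSeq_mul_pow :
    ∑' n, (1 - (aSeq n : ℝ)) * z ^ n = ((1 - z)⁻¹ + ∑' n, digitTwoSign n * z ^ n) / 2 := by
  have hsum := summable_mul_pow_of_abs_le (fun n ↦ (abs_digitTwoSign n).le) hz
  have hterm : ∀ n, (1 - (aSeq n : ℝ)) * z ^ n = (z ^ n + digitTwoSign n * z ^ n) / 2 := by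
    intro n; rw [aSeq_eq_one_sub_digitTwoSign_div_two]; ring
  rw [tsum_congr hterm, tsum_div_const, (summable_geometric_of_abs_lt_one hz).tsum_add hsum,
    tsum_geometric_of_abs_lt_one hz]

end GeneratingSeries

/-- At the point `φ = (1−√5)/2` of the open unit disc one has `f₁(φ) = f₂(φ)`, and
consequently `f₁(φ) = −φ/2 ∈ ℚ(√5)`, where `f₁, f₂` are the generating series of the
sequences `aSeq` and `1 − aSeq`. -/
theorem value_at_golden_conjugate :
    (∑' n : ℕ, (aSeq n : ℝ) * ((1 - Real.sqrt 5) / 2) ^ n) =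
      (∑' n : ℕ, ((1 : ℝ) - (aSeq n : ℝ)) * ((1 - Real.sqrt 5) / 2) ^ n) ∧
    (∑' n : ℕ, (aSeq n : ℝ) * ((1 - Real.sqrt 5) / 2) ^ n) =
      -((1 - Real.sqrt 5) / 2) / 2 := by
  change ∑' n, (aSeq n : ℝ) * ψ ^ n = ∑' n, (1 - (aSeq n : ℝ)) * ψ ^ n ∧
    ∑' n, (aSeq n : ℝ) * ψ ^ n = -ψ / 2
  rw [tsum_aSeq_mul_pow abs_goldenConj_lt_one, tsum_one_sub_aSeq_mul_pow abs_goldenConj_lt_one,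
    tsum_digitTwoSign_mul_goldenConj_pow, one_sub_goldenRatio, inv_goldenRatio]
  constructor <;> ring
end
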